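/- arXiv:1709.04769 — 4 statements merged into one kernel-verified Lean document; each statement's English description precedes it below -/
import Mathlib

section
/- Let E and F be Banach spaces and let ε, σ_a, σ_s, R be real numbers with 0 < ε < 1, σ_a > 0, σ_s > 0, R > 0, and set β = σ_a + σ_s. Let K₁ : E → E, K₂ : F → E, K₃ : F → F, K₄ : E → F be continuous linear operators satisfying ‖K₁‖ ≤ 1 − ε, ‖K₂‖ ≤ ε σ_s / (4β), ‖K₃‖ ≤ (σ_s/β)(1 − exp(−βR)), and ‖K₄‖ ≤ 4(1 − ε)/ε. If ((1 − ε)/ε) · σ_s / (σ_a + σ_s · exp(−βR)) < 1, then for every f₁ ∈ E and f₂ ∈ F there exists a unique pair (q, G) ∈ E × F satisfying q = K₁ q + K₂ G + f₁ and G = K₄ q + K₃ G + f₂. -/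
/-!
Eliminating `q = (1 - K₁)⁻¹ (K₂ G + f₁)` reduces the system to the single equation
`(1 - T) G = K₄ (1 - K₁)⁻¹ f₁ + f₂` for the Schur complement `T = K₃ + K₄ (1 - K₁)⁻¹ K₂`.
The Neumann series gives `‖(1 - K₁)⁻¹‖ ≤ (1 - ‖K₁‖)⁻¹ ≤ ε⁻¹`, hence
`‖T‖ ≤ (σs/β)(1 - e^{-βR}) + ((1 - ε)/ε)(σs/β)`, which is `< 1` exactly when
`(1 - ε) σs < ε (σa + σs e^{-βR})`; a second Neumann series then inverts `1 - T`.
-/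

theorem Units.norm_inv_oneSub_le {A : Type*} [NormedRing A] [HasSummableGeomSeries A]
    (x : A) (hx : ‖x‖ < 1) (h1 : ‖(1 : A)‖ ≤ 1) :
    ‖(↑(Units.oneSub x hx)⁻¹ : A)‖ ≤ (1 - ‖x‖)⁻¹ :=
  (tsum_geometric_le_of_norm_lt_one x hx).trans (by linarith)

namespace ContinuousLinearMap

section BlockSystem

variable {R E F : Type*} [Ring R]
  [TopologicalSpace E] [AddCommGroup E] [IsTopologicalAddGroup E] [Module R E]
  [TopologicalSpace F] [AddCommGroup F] [IsTopologicalAddGroup F] [Module R F]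
  {K₁ : E →L[R] E} {K₂ : F →L[R] E} {K₃ : F →L[R] F} {K₄ : E →L[R] F}

theorem eq_units_inv_apply_iff (u : (E →L[R] E)ˣ) (x y : E) :
    x = (↑u⁻¹ : E →L[R] E) y ↔ (u : E →L[R] E) x = y :=
  eq_inv_smul_iff (g := u)

theorem block_system_iff_schur (u : (E →L[R] E)ˣ) (hu : (u : E →L[R] E) = 1 - K₁)
    (q f₁ : E) (G f₂ : F) :
    (q = K₁ q + K₂ G + f₁ ∧ G = K₄ q + K₃ G + f₂) ↔
      (q = (↑u⁻¹ : E →L[R] E) (K₂ G + f₁) ∧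
        (1 - (K₃ + K₄ ∘L ↑u⁻¹ ∘L K₂)) G = K₄ ((↑u⁻¹ : E →L[R] E) f₁) + f₂) := by
  have hq : q = K₁ q + K₂ G + f₁ ↔ q = (↑u⁻¹ : E →L[R] E) (K₂ G + f₁) := by
    rw [eq_units_inv_apply_iff, hu, sub_apply, one_apply_eq_self, sub_eq_iff_eq_add']
    exact Iff.of_eq (congrArg (q = ·) (by abel))
  rw [hq]
  refine and_congr_right fun hq => ?_
  rw [hq, sub_apply, one_apply_eq_self, sub_eq_iff_eq_add, add_apply, comp_apply, comp_apply,
    map_add, map_add]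
  exact Iff.of_eq (congrArg (G = ·) (by abel))

theorem existsUnique_block_solution (u : (E →L[R] E)ˣ) (hu : (u : E →L[R] E) = 1 - K₁)
    (v : (F →L[R] F)ˣ) (hv : (v : F →L[R] F) = 1 - (K₃ + K₄ ∘L ↑u⁻¹ ∘L K₂)) (f₁ : E) (f₂ : F) :
    ∃! p : E × F, p.1 = K₁ p.1 + K₂ p.2 + f₁ ∧ p.2 = K₄ p.1 + K₃ p.2 + f₂ := by
  simp only [block_system_iff_schur u hu, ← hv]
  set G := (↑v⁻¹ : F →L[R] F) (K₄ ((↑u⁻¹ : E →L[R] E) f₁) + f₂)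
  refine ⟨((↑u⁻¹ : E →L[R] E) (K₂ G + f₁), G), ⟨rfl, (eq_units_inv_apply_iff v _ _).1 rfl⟩, ?_⟩
  rintro ⟨q', G'⟩ ⟨hq', hG'⟩
  obtain rfl : G' = G := (eq_units_inv_apply_iff v _ _).2 hG'
  exact Prod.ext hq' rfl

end BlockSystem

section Normed

variable {𝕜 E F : Type*} [NontriviallyNormedField 𝕜]
  [NormedAddCommGroup E] [NormedSpace 𝕜 E] [CompleteSpace E]
  [NormedAddCommGroup F] [NormedSpace 𝕜 F]
  {K₁ : E →L[𝕜] E} {K₂ : F →L[𝕜] E} {K₃ : F →L[𝕜] F} {K₄ : E →L[𝕜] F}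

theorem norm_schur_le (h₁ : ‖K₁‖ < 1) :
    ‖K₃ + K₄ ∘L ↑(Units.oneSub K₁ h₁)⁻¹ ∘L K₂‖ ≤ ‖K₃‖ + ‖K₄‖ * ‖K₂‖ / (1 - ‖K₁‖) := by
  have hinv := Units.norm_inv_oneSub_le K₁ h₁ norm_id_le
  calc _ ≤ ‖K₃‖ + ‖K₄‖ * (‖(↑(Units.oneSub K₁ h₁)⁻¹ : E →L[𝕜] E)‖ * ‖K₂‖) := by
        grw [norm_add_le, opNorm_comp_le, opNorm_comp_le]
    _ ≤ ‖K₃‖ + ‖K₄‖ * ((1 - ‖K₁‖)⁻¹ * ‖K₂‖) := by gcongr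
    _ = ‖K₃‖ + ‖K₄‖ * ‖K₂‖ / (1 - ‖K₁‖) := by ring

theorem existsUnique_block_solution_of_norm_lt [CompleteSpace F] (h₁ : ‖K₁‖ < 1)
    (h : ‖K₃‖ + ‖K₄‖ * ‖K₂‖ / (1 - ‖K₁‖) < 1) (f₁ : E) (f₂ : F) :
    ∃! p : E × F, p.1 = K₁ p.1 + K₂ p.2 + f₁ ∧ p.2 = K₄ p.1 + K₃ p.2 + f₂ :=
  existsUnique_block_solution (Units.oneSub K₁ h₁) rfl
    (Units.oneSub _ ((norm_schur_le h₁).trans_lt h)) rfl f₁ f₂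

end Normed

end ContinuousLinearMap

theorem radiative_schur_bound_lt_one {ε σa σs x : ℝ} (hε : 0 < ε) (hσa : 0 < σa) (hσs : 0 < σs)
    (hx : 0 ≤ x) (hcond : ((1 - ε) / ε) * (σs / (σa + σs * x)) < 1) :
    σs / (σa + σs) * (1 - x) + 4 * (1 - ε) / ε * (ε * σs / (4 * (σa + σs))) / ε < 1 := by
  have hlt : (1 - ε) * σs < ε * (σa + σs * x) := by
    rwa [div_mul_div_comm, div_lt_one (by positivity)] at hcond
  have hrw : σs / (σa + σs) * (1 - x) + 4 * (1 - ε) / ε * (ε * σs / (4 * (σa + σs))) / ε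
      = (ε * σs * (1 - x) + (1 - ε) * σs) / (ε * (σa + σs)) := by
    field_simp
  rw [hrw, div_lt_one (by positivity)]
  linarith

theorem stmt_1_general {E F : Type*} [NormedAddCommGroup E] [NormedSpace ℝ E] [CompleteSpace E]
    [NormedAddCommGroup F] [NormedSpace ℝ F] [CompleteSpace F]
    (ε σa σs R β : ℝ) (hε0 : 0 < ε) (hσa : 0 < σa) (hσs : 0 < σs)
    (hβ : β = σa + σs)
    (K₁ : E →L[ℝ] E) (K₂ : F →L[ℝ] E) (K₃ : F →L[ℝ] F) (K₄ : E →L[ℝ] F)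
    (hK₁ : ‖K₁‖ ≤ 1 - ε)
    (hK₂ : ‖K₂‖ ≤ ε * σs / (4 * β))
    (hK₃ : ‖K₃‖ ≤ (σs / β) * (1 - Real.exp (-β * R)))
    (hK₄ : ‖K₄‖ ≤ 4 * (1 - ε) / ε)
    (hcond : ((1 - ε) / ε) * (σs / (σa + σs * Real.exp (-β * R))) < 1) :
    ∀ (f₁ : E) (f₂ : F), ∃! u : E × F,
      u.1 = K₁ u.1 + K₂ u.2 + f₁ ∧ u.2 = K₄ u.1 + K₃ u.2 + f₂ := by
  subst hβ
  have hK₄nonneg : 0 ≤ 4 * (1 - ε) / ε := (norm_nonneg K₄).trans hK₄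
  refine ContinuousLinearMap.existsUnique_block_solution_of_norm_lt (by linarith) ?_
  calc ‖K₃‖ + ‖K₄‖ * ‖K₂‖ / (1 - ‖K₁‖)
      ≤ σs / (σa + σs) * (1 - Real.exp (-(σa + σs) * R))
        + 4 * (1 - ε) / ε * (ε * σs / (4 * (σa + σs))) / ε := by
        gcongr; linarith
    _ < 1 := radiative_schur_bound_lt_one hε0 hσa hσs (Real.exp_pos _).le hcond

/-- Quantitative form of the paper's Theorem 1: under the norm bounds of Corollary 1 for the
four radiative integral operators (with emissivity `ε`, absorption `σa`, scattering `σs`,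
extinction `β = σa + σs`, enclosure diameter `R`), if
`((1 - ε)/ε) · σs / (σa + σs · exp(-βR)) < 1` then the radiative integral system
`q = K₁ q + K₂ G + f₁`, `G = K₄ q + K₃ G + f₂` has a unique solution. -/
theorem stmt_1 {E F : Type*} [NormedAddCommGroup E] [NormedSpace ℝ E] [CompleteSpace E]
    [NormedAddCommGroup F] [NormedSpace ℝ F] [CompleteSpace F]
    (ε σa σs R β : ℝ) (hε0 : 0 < ε) (hε1 : ε < 1) (hσa : 0 < σa) (hσs : 0 < σs)
    (hR : 0 < R) (hβ : β = σa + σs)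
    (K₁ : E →L[ℝ] E) (K₂ : F →L[ℝ] E) (K₃ : F →L[ℝ] F) (K₄ : E →L[ℝ] F)
    (hK₁ : ‖K₁‖ ≤ 1 - ε)
    (hK₂ : ‖K₂‖ ≤ ε * σs / (4 * β))
    (hK₃ : ‖K₃‖ ≤ (σs / β) * (1 - Real.exp (-β * R)))
    (hK₄ : ‖K₄‖ ≤ 4 * (1 - ε) / ε)
    (hcond : ((1 - ε) / ε) * (σs / (σa + σs * Real.exp (-β * R))) < 1) :
    ∀ (f₁ : E) (f₂ : F), ∃! u : E × F,
      u.1 = K₁ u.1 + K₂ u.2 + f₁ ∧ u.2 = K₄ u.1 + K₃ u.2 + f₂ :=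
  stmt_1_general ε σa σs R β hε0 hσa hσs hβ K₁ K₂ K₃ K₄ hK₁ hK₂ hK₃ hK₄ hcond
end

section
/- Let p ∈ ℝ³, let n ∈ ℝ³ be a unit vector, and let β > 0. Then the integral of exp(−β‖r − p‖) · ((r − p) · n) / ‖r − p‖³ over the open half-space H = { r ∈ ℝ³ : (r − p) · n > 0 } with respect to Lebesgue measure equals π/β. -/
/-!
In dimension `d + 1`, translate `p` to the origin and write the half-space weight as
`max ⟪x, n⟫ 0`. In polar coordinates the integrand splits into the angular factor `max ⟪ω, n⟫ 0` and the radial factor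
`exp (-β r) / r ^ (d + 1)`, which the Jacobian `r ^ d` turns into `exp (-β r)`, of integral `1 / β`.
The angular integral is the volume `π ^ (d / 2) / Γ (d / 2 + 1)` of the unit `d`-ball (the
hemisphere projected onto the hyperplane orthogonal to `n`): it is read off from
`∫ exp (-‖x‖²) max ⟪x, n⟫ 0`, computed once in polar coordinates and once as a product of
one-dimensional integrals in an orthonormal basis starting with `n`.
-/

open MeasureTheory Real Set Metric Module
open scoped RealInnerProductSpace

section Polar

variable {E : Type*} [NormedAddCommGroup E] [NormedSpace ℝ E] [Nontrivial E]
  [FiniteDimensional ℝ E] [MeasurableSpace E] [BorelSpace E] (μ : Measure E) [μ.IsAddHaarMeasure]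

theorem integral_comp_smul_inv_norm_mul_fun_norm_addHaar (g : E → ℝ) (f : ℝ → ℝ) :
    ∫ x, g (‖x‖⁻¹ • x) * f ‖x‖ ∂μ =
      (∫ ω : sphere (0 : E) 1, g ω ∂μ.toSphere) *
        ∫ r in Ioi (0 : ℝ), r ^ (finrank ℝ E - 1) * f r := by
  calc ∫ x, g (‖x‖⁻¹ • x) * f ‖x‖ ∂μ
      = ∫ x : ({0}ᶜ : Set E), g (‖(x : E)‖⁻¹ • (x : E)) * f ‖(x : E)‖ ∂μ.comap (↑) := by
        rw [integral_subtype_comap (measurableSet_singleton _).compl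
          fun x ↦ g (‖x‖⁻¹ • x) * f ‖x‖, restrict_compl_singleton]
    _ = ∫ y : sphere (0 : E) 1 × Ioi (0 : ℝ), g y.1 * f y.2
          ∂μ.toSphere.prod (.volumeIoiPow (finrank ℝ E - 1)) := by
        simpa using μ.measurePreserving_homeomorphUnitSphereProd.integral_comp
          (Homeomorph.measurableEmbedding _) fun y ↦ g y.1 * f y.2
    _ = (∫ ω, g ω ∂μ.toSphere) * ∫ r : Ioi (0 : ℝ), f r ∂.volumeIoiPow (finrank ℝ E - 1) :=
        integral_prod_mul (fun ω : sphere (0 : E) 1 ↦ g ω) fun r : Ioi (0 : ℝ) ↦ f r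
    _ = _ := by
      simp only [Measure.volumeIoiPow, ENNReal.ofReal]
      rw [integral_withDensity_eq_integral_smul
          (measurable_subtype_coe.pow_const _).real_toNNReal,
        integral_subtype_comap measurableSet_Ioi fun r ↦ (r ^ (finrank ℝ E - 1)).toNNReal • f r,
        setIntegral_congr_fun measurableSet_Ioi fun r hr ↦ by
          rw [NNReal.smul_def, Real.coe_toNNReal _ (pow_nonneg (le_of_lt hr) _), smul_eq_mul]]

end Polar

section InnerProductSpace

variable {E : Type*} [NormedAddCommGroup E] [InnerProductSpace ℝ E]

theorem max_inner_eq_norm_mul_max_inner_smul_inv_norm (x n : E) :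
    max ⟪x, n⟫ 0 = ‖x‖ * max ⟪‖x‖⁻¹ • x, n⟫ 0 := by
  rcases eq_or_ne x 0 with rfl | hx
  · simp
  rw [real_inner_smul_left, mul_max_of_nonneg _ _ (norm_nonneg x), mul_zero,
    mul_inv_cancel_left₀ (norm_ne_zero_iff.2 hx)]

theorem setIntegral_inner_sub_pos_eq_integral_max_inner [MeasurableSpace E] [BorelSpace E]
    (μ : Measure E) [μ.IsAddRightInvariant] (p n : E) (f : ℝ → ℝ) :
    ∫ r in {r | 0 < ⟪r - p, n⟫}, ⟪r - p, n⟫ * f ‖r - p‖ ∂μ = ∫ x, max ⟪x, n⟫ 0 * f ‖x‖ ∂μ := by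
  rw [← integral_indicator (measurableSet_lt measurable_const (by fun_prop)),
    ← integral_add_right_eq_self _ p]
  congr 1 with x
  rcases le_or_gt ⟪x, n⟫ 0 with hx | hx
  · simp [hx, not_lt.2 hx]
  · simp [hx, hx.le]

variable [Nontrivial E] [FiniteDimensional ℝ E] [MeasurableSpace E] [BorelSpace E]
  (μ : Measure E) [μ.IsAddHaarMeasure]

theorem integral_max_inner_mul_fun_norm_addHaar (n : E) (f : ℝ → ℝ) :
    ∫ x, max ⟪x, n⟫ 0 * f ‖x‖ ∂μ =
      (∫ ω : sphere (0 : E) 1, max ⟪(ω : E), n⟫ 0 ∂μ.toSphere) *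
        ∫ r in Ioi (0 : ℝ), r ^ finrank ℝ E * f r := by
  have hdim : finrank ℝ E - 1 + 1 = finrank ℝ E := Nat.sub_add_cancel finrank_pos
  calc ∫ x, max ⟪x, n⟫ 0 * f ‖x‖ ∂μ
      = ∫ x, max ⟪‖x‖⁻¹ • x, n⟫ 0 * (‖x‖ * f ‖x‖) ∂μ := by
        congr 1 with x
        rw [max_inner_eq_norm_mul_max_inner_smul_inv_norm x n]
        ring
    _ = _ := by
      rw [integral_comp_smul_inv_norm_mul_fun_norm_addHaar μ (fun y ↦ max ⟪y, n⟫ 0)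
        fun r ↦ r * f r]
      congr 1
      refine setIntegral_congr_fun measurableSet_Ioi fun r _ ↦ ?_
      rw [← mul_assoc, ← pow_succ, hdim]

end InnerProductSpace

theorem integral_pow_mul_exp_neg_sq_Ioi (k : ℕ) :
    ∫ r in Ioi (0 : ℝ), r ^ k * exp (-r ^ 2) = Gamma ((k + 1) / 2) / 2 := by
  have h := integral_rpow_mul_exp_neg_mul_rpow (p := 2) (q := k) (b := 1) two_pos
    (by linarith [k.cast_nonneg (α := ℝ)]) one_pos
  simp only [one_rpow, one_mul, neg_one_mul, rpow_natCast, rpow_ofNat] at h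
  rw [h]
  ring

theorem integral_max_mul_exp_neg_sq : ∫ t : ℝ, max t 0 * exp (-t ^ 2) = 1 / 2 := by
  have hind : (fun t : ℝ ↦ max t 0 * exp (-t ^ 2)) =
      (Ioi 0).indicator fun t ↦ t ^ 1 * exp (-t ^ 2) := by
    ext t
    rcases le_or_gt t 0 with ht | ht
    · simp [ht, not_lt.2 ht]
    · simp [ht, ht.le]
  rw [hind, integral_indicator measurableSet_Ioi, integral_pow_mul_exp_neg_sq_Ioi]
  norm_num

section FiniteDimensional

variable {E : Type*} [NormedAddCommGroup E] [InnerProductSpace ℝ E] [FiniteDimensional ℝ E]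

theorem exists_orthonormalBasis_apply_zero_eq {d : ℕ} (hd : finrank ℝ E = d + 1) {n : E}
    (hn : ‖n‖ = 1) : ∃ b : OrthonormalBasis (Fin (d + 1)) ℝ E, b 0 = n := by
  obtain ⟨b, hb⟩ := Orthonormal.exists_orthonormalBasis_extension_of_card_eq
    (v := fun _ ↦ n) (s := {(0 : Fin (d + 1))}) (by simpa using hd)
    (orthonormal_subsingleton_iff.2 fun _ ↦ hn)
  exact ⟨b, hb 0 rfl⟩

variable [MeasurableSpace E] [BorelSpace E]

theorem integral_exp_neg_norm_sq_mul_max_inner {d : ℕ} (hd : finrank ℝ E = d + 1) {n : E}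
    (hn : ‖n‖ = 1) : ∫ x, exp (-‖x‖ ^ 2) * max ⟪x, n⟫ 0 = √π ^ d / 2 := by
  obtain ⟨b, rfl⟩ := exists_orthonormalBasis_apply_zero_eq hd hn
  let e : (Fin (d + 1) → ℝ) → E := fun z ↦ b.repr.symm (WithLp.toLp 2 z)
  have he : MeasurePreserving e :=
    b.measurePreserving_repr_symm.comp (PiLp.volume_preserving_toLp _)
  have he' : MeasurableEmbedding e :=
    b.repr.symm.toHomeomorph.measurableEmbedding.comp
      (MeasurableEquiv.toLp 2 _).measurableEmbedding
  let h : Fin (d + 1) → ℝ → ℝ := fun i t ↦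
    if i = 0 then max t 0 * exp (-t ^ 2) else exp (-t ^ 2)
  have hfactor (z : Fin (d + 1) → ℝ) :
      exp (-‖e z‖ ^ 2) * max ⟪e z, b 0⟫ 0 = ∏ i, h i (z i) := by
    have hinner : ⟪e z, b 0⟫ = z 0 := by
      rw [real_inner_comm, ← b.repr_apply_apply, LinearIsometryEquiv.apply_symm_apply]
    rw [hinner, LinearIsometryEquiv.norm_map, EuclideanSpace.norm_sq_eq, ← Finset.sum_neg_distrib,
      exp_sum, Fin.prod_univ_succ, Fin.prod_univ_succ]
    simp only [norm_eq_abs, sq_abs, ↓reduceIte, Fin.succ_ne_zero, h]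
    ring
  rw [← he.integral_comp he', funext hfactor, integral_fintype_prod_volume_eq_prod,
    Fin.prod_univ_succ]
  have hgauss : ∫ t : ℝ, exp (-t ^ 2) = √π := by simpa using integral_gaussian 1
  simp only [↓reduceIte, integral_max_mul_exp_neg_sq, one_div, Fin.succ_ne_zero, hgauss,
    Finset.prod_const, Finset.card_univ, Fintype.card_fin, h]
  ring

theorem integral_toSphere_max_inner {d : ℕ} (hd : finrank ℝ E = d + 1) {n : E} (hn : ‖n‖ = 1) :
    ∫ ω : sphere (0 : E) 1, max ⟪(ω : E), n⟫ 0 ∂(volume : Measure E).toSphere =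
      √π ^ d / Gamma (d / 2 + 1) := by
  have : Nontrivial E := Module.nontrivial_of_finrank_eq_succ hd
  have hpolar := integral_max_inner_mul_fun_norm_addHaar (volume : Measure E) n
    fun r ↦ exp (-r ^ 2)
  have hΓ : Gamma (((d + 1 : ℕ) + 1) / 2) = Gamma (d / 2 + 1) := by
    congr 1
    push_cast
    ring
  have hΓpos : 0 < Gamma (d / 2 + 1) := Gamma_pos_of_pos (by positivity)
  simp_rw [mul_comm (max _ _), integral_exp_neg_norm_sq_mul_max_inner hd hn, hd,
    integral_pow_mul_exp_neg_sq_Ioi, hΓ] at hpolar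
  rw [eq_div_iff hΓpos.ne']
  linarith

theorem setIntegral_exp_neg_mul_norm_mul_inner_div_norm_pow {d : ℕ} (hd : finrank ℝ E = d + 1)
    (p : E) {n : E} (hn : ‖n‖ = 1) {β : ℝ} (hβ : 0 < β) :
    ∫ r in {r | 0 < ⟪r - p, n⟫}, exp (-β * ‖r - p‖) * ⟪r - p, n⟫ / ‖r - p‖ ^ (d + 1) =
      √π ^ d / Gamma (d / 2 + 1) / β := by
  have : Nontrivial E := Module.nontrivial_of_finrank_eq_succ hd
  calc ∫ r in {r | 0 < ⟪r - p, n⟫}, exp (-β * ‖r - p‖) * ⟪r - p, n⟫ / ‖r - p‖ ^ (d + 1)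
      = ∫ r in {r | 0 < ⟪r - p, n⟫}, ⟪r - p, n⟫ * (exp (-β * ‖r - p‖) / ‖r - p‖ ^ (d + 1)) := by
        congr 1 with r
        ring
    _ = (∫ ω : sphere (0 : E) 1, max ⟪(ω : E), n⟫ 0 ∂(volume : Measure E).toSphere) *
          ∫ r in Ioi (0 : ℝ), exp (-β * r) := by
        rw [setIntegral_inner_sub_pos_eq_integral_max_inner volume p n
          fun t ↦ exp (-β * t) / t ^ (d + 1),
          integral_max_inner_mul_fun_norm_addHaar volume n fun t ↦ exp (-β * t) / t ^ (d + 1), hd]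
        congr 1
        exact setIntegral_congr_fun measurableSet_Ioi fun r hr ↦
          mul_div_cancel₀ _ (pow_ne_zero _ (ne_of_gt hr))
    _ = √π ^ d / Gamma (d / 2 + 1) / β := by
        rw [integral_toSphere_max_inner hd hn, integral_exp_mul_Ioi (neg_lt_zero.2 hβ), mul_zero,
          exp_zero]
        field_simp

end FiniteDimensional

/-- Exact half-space integral underlying inequality (10) of the paper's Lemma 2: for a unit
vector `n` and `β > 0`, the integral of `exp(-β‖r - p‖) ((r - p)·n)/‖r - p‖³` over the open
half-space `{r : (r - p)·n > 0}` equals `π/β`. -/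
theorem stmt_5 (p n : EuclideanSpace ℝ (Fin 3)) (hn : ‖n‖ = 1) (β : ℝ) (hβ : 0 < β) :
    ∫ r in {r : EuclideanSpace ℝ (Fin 3) | 0 < ⟪r - p, n⟫},
      Real.exp (-β * ‖r - p‖) * ⟪r - p, n⟫ / ‖r - p‖ ^ 3 = π / β := by
  convert setIntegral_exp_neg_mul_norm_mul_inner_div_norm_pow (d := 2) (by simp) p hn hβ using 2
  norm_num [Gamma_two, sq_sqrt pi_nonneg]
end

section
/- Let p ∈ ℝ³, let n ∈ ℝ³ be a unit vector, let β > 0, and let V ⊆ ℝ³ be a measurable set contained in the half-space { r ∈ ℝ³ : (r − p) · n > 0 }. Then ∫_V exp(−β‖r − p‖) · ((r − p) · n) / ‖r − p‖³ dr ≤ π/β. -/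
/-!
In spherical coordinates `x = r • θ` about `p`, the integrand becomes
`exp (-β r) * ⟪θ, n⟫` (the factor `r⁻²` cancels the Jacobian `r²`), so over the half-space it
integrates to `(1 / β) * ∫ ⟪θ, n⟫⁺ dσ(θ)`, and a subset `V` of the half-space can only give less,
the integrand being non-negative there. The hemisphere integral `∫ ⟪θ, n⟫⁺ dσ(θ)` is read off
from the Gaussian `⟪x, n⟫⁺ exp (-‖x‖²)`: in spherical coordinates its integral is that hemisphere
integral times `∫ r³ exp (-r²) dr = 1 / 2`, while in an orthonormal frame with first vector `n` it
splits over the coordinates into `(1 / 2) * √π * √π`; hence the hemisphere integral is `π`.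
-/

open MeasureTheory Real Set Metric
open scoped RealInnerProductSpace ENNReal

section Polar

variable {E : Type*} [NormedAddCommGroup E] [NormedSpace ℝ E] [MeasurableSpace E] [BorelSpace E]
  [FiniteDimensional ℝ E] [Nontrivial E] (μ : Measure E) [μ.IsAddHaarMeasure]

theorem lintegral_eq_lintegral_toSphere_lintegral_Ioi (f : E → ℝ≥0∞) (hf : Measurable f) :
    ∫⁻ x, f x ∂μ = ∫⁻ θ, (∫⁻ r in Ioi (0 : ℝ),
      ENNReal.ofReal (r ^ (Module.finrank ℝ E - 1)) * f (r • (θ : E))) ∂μ.toSphere := by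
  set g : sphere (0 : E) 1 × Ioi (0 : ℝ) → ℝ≥0∞ := fun p ↦ f ((homeomorphUnitSphereProd E).symm p)
  have hg : Measurable g := hf.comp (measurable_subtype_coe.comp (Homeomorph.measurable _))
  calc ∫⁻ x, f x ∂μ = ∫⁻ x in {0}ᶜ, f x ∂μ := by rw [restrict_compl_singleton]
    _ = ∫⁻ x : ({0}ᶜ : Set E), g (homeomorphUnitSphereProd E x) ∂(μ.comap (↑)) := by
        rw [← lintegral_subtype_comap (measurableSet_singleton _).compl]
        simp only [g, Homeomorph.symm_apply_apply]
    _ = ∫⁻ p, g p ∂(μ.toSphere.prod (Measure.volumeIoiPow (Module.finrank ℝ E - 1))) :=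
        μ.measurePreserving_homeomorphUnitSphereProd.lintegral_comp_emb
          (Homeomorph.measurableEmbedding _) g
    _ = _ := by
        rw [lintegral_prod _ hg.aemeasurable]
        refine lintegral_congr fun θ ↦ ?_
        rw [Measure.volumeIoiPow,
          lintegral_withDensity_eq_lintegral_mul _ (by fun_prop) (by fun_prop),
          ← lintegral_subtype_comap measurableSet_Ioi]
        simp [g]

theorem lintegral_mul_norm_eq_lintegral_toSphere_mul {φ : E → ℝ≥0∞} (hφ : Measurable φ)
    (hφ_smul : ∀ x : E, ∀ r : ℝ, 0 < r → φ (r • x) = φ x) {h : ℝ → ℝ≥0∞} (hh : Measurable h) :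
    ∫⁻ x, φ x * h ‖x‖ ∂μ = (∫⁻ θ, φ θ ∂μ.toSphere) *
      ∫⁻ r in Ioi (0 : ℝ), ENNReal.ofReal (r ^ (Module.finrank ℝ E - 1)) * h r := by
  rw [lintegral_eq_lintegral_toSphere_lintegral_Ioi μ (fun x ↦ φ x * h ‖x‖) (by fun_prop),
    ← lintegral_mul_const (f := fun θ : sphere (0 : E) 1 ↦ φ θ) _ (by fun_prop)]
  refine lintegral_congr fun θ ↦ ?_
  rw [← lintegral_const_mul _ (by fun_prop)]
  refine setLIntegral_congr_fun measurableSet_Ioi fun r (hr : 0 < r) ↦ ?_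
  rw [hφ_smul _ _ hr, norm_smul, norm_eq_of_mem_sphere θ, mul_one, norm_of_nonneg hr.le]
  ring

end Polar

theorem lintegral_ofReal_inner_div_norm_mul {E : Type*} [NormedAddCommGroup E]
    [InnerProductSpace ℝ E] [FiniteDimensional ℝ E] [MeasurableSpace E] [BorelSpace E]
    [Nontrivial E] (μ : Measure E) [μ.IsAddHaarMeasure] (n : E) (h : ℝ → ℝ≥0∞)
    (hh : Measurable h) :
    ∫⁻ x, ENNReal.ofReal (⟪x, n⟫ / ‖x‖) * h ‖x‖ ∂μ =
      (∫⁻ θ, ENNReal.ofReal ⟪(θ : E), n⟫ ∂μ.toSphere) *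
        ∫⁻ r in Ioi (0 : ℝ), ENNReal.ofReal (r ^ (Module.finrank ℝ E - 1)) * h r := by
  rw [lintegral_mul_norm_eq_lintegral_toSphere_mul μ (by fun_prop) (fun x r hr ↦ ?_) hh]
  · congr 1
    refine lintegral_congr fun θ ↦ ?_
    rw [norm_eq_of_mem_sphere θ, div_one]
  · rw [real_inner_smul_left, norm_smul, norm_of_nonneg hr.le, mul_div_mul_left _ _ hr.ne']

theorem lintegral_fin_nat_prod_eq_prod {α : Type*} [MeasurableSpace α] {n : ℕ}
    {μ : Fin n → Measure α} [∀ i, SigmaFinite (μ i)] (f : Fin n → α → ℝ≥0∞)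
    (hf : ∀ i, Measurable (f i)) :
    ∫⁻ x, ∏ i, f i (x i) ∂(Measure.pi μ) = ∏ i, ∫⁻ x, f i x ∂(μ i) := by
  induction n with
  | zero => simp
  | succ n ih =>
    calc ∫⁻ x, ∏ i, f i (x i) ∂(Measure.pi μ)
        = ∫⁻ x : α × (Fin n → α), f 0 x.1 * ∏ i : Fin n, f i.succ (x.2 i)
            ∂((μ 0).prod (Measure.pi fun i ↦ μ i.succ)) := by
          rw [← (measurePreserving_piFinSuccAbove μ 0).symm.lintegral_comp_emb
            (MeasurableEquiv.measurableEmbedding _)]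
          simp_rw [MeasurableEquiv.piFinSuccAbove_symm_apply, Fin.insertNthEquiv,
            Fin.prod_univ_succ, Fin.insertNth_zero, Equiv.coe_fn_mk, Fin.cons_succ,
            Fin.zero_succAbove, cast_eq, Fin.cons_zero]
      _ = (∫⁻ x, f 0 x ∂μ 0) * ∏ i : Fin n, ∫⁻ x, f i.succ x ∂(μ i.succ) := by
          rw [← ih _ fun i ↦ hf i.succ]
          exact lintegral_prod_mul (hf 0).aemeasurable (Finset.measurable_prod _
            fun (i : Fin n) _ ↦ (hf i.succ).comp (measurable_pi_apply i)).aemeasurable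
      _ = ∏ i, ∫⁻ x, f i x ∂(μ i) := (Fin.prod_univ_succ fun i ↦ ∫⁻ x, f i x ∂(μ i)).symm

theorem lintegral_Ioi_ofReal_pow_mul_exp_neg_sq (m : ℕ) :
    ∫⁻ x in Ioi (0 : ℝ), ENNReal.ofReal (x ^ (2 * m + 1) * exp (-x ^ 2)) =
      ENNReal.ofReal (m.factorial / 2) := by
  have hm : (-1 : ℝ) < (2 * m + 1 : ℕ) := by linarith [(2 * m + 1).cast_nonneg (α := ℝ)]
  have hrpow : ∀ x : ℝ, x ^ (2 * m + 1) * exp (-x ^ 2) =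
      x ^ ((2 * m + 1 : ℕ) : ℝ) * exp (-1 * x ^ (2 : ℝ)) := fun x ↦ by
    rw [rpow_natCast, rpow_two, neg_one_mul]
  simp_rw [hrpow]
  rw [← ofReal_integral_eq_lintegral_ofReal
    (integrableOn_rpow_mul_exp_neg_mul_rpow hm two_pos one_pos),
    integral_rpow_mul_exp_neg_mul_rpow two_pos hm one_pos]
  · push_cast
    rw [one_rpow, one_mul, show ((2 * m + 1 : ℝ) + 1) / 2 = m + 1 by ring,
      Gamma_nat_eq_factorial]
    ring_nf
  · filter_upwards [ae_restrict_mem measurableSet_Ioi] with x (hx : 0 < x)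
    positivity

theorem lintegral_ofReal_exp_neg_sq :
    ∫⁻ t : ℝ, ENNReal.ofReal (exp (-t ^ 2)) = ENNReal.ofReal √π := by
  rw [← ofReal_integral_eq_lintegral_ofReal (by simpa using integrable_exp_neg_mul_sq one_pos)
    (.of_forall fun t ↦ (exp_pos _).le)]
  exact congrArg ENNReal.ofReal (by simpa using integral_gaussian 1)

theorem lintegral_ofReal_mul_exp_neg_sq :
    ∫⁻ t : ℝ, ENNReal.ofReal (t * exp (-t ^ 2)) = ENNReal.ofReal (1 / 2) := by
  have hsupp : (fun t : ℝ ↦ ENNReal.ofReal (t * exp (-t ^ 2))).support ⊆ Ioi 0 :=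
    fun t ht ↦ lt_of_not_ge fun hle ↦
      ht (ENNReal.ofReal_eq_zero.2 (mul_nonpos_of_nonpos_of_nonneg hle (exp_pos _).le))
  rw [← setLIntegral_eq_of_support_subset hsupp]
  simpa using lintegral_Ioi_ofReal_pow_mul_exp_neg_sq 0

theorem lintegral_ofReal_coord_mul_exp_neg_norm_sq :
    ∫⁻ x : EuclideanSpace ℝ (Fin 3), ENNReal.ofReal (x 0 * exp (-‖x‖ ^ 2)) =
      ENNReal.ofReal (π / 2) := by
  set f : Fin 3 → ℝ → ℝ≥0∞ := ![fun t ↦ ENNReal.ofReal (t * exp (-t ^ 2)),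
    fun t ↦ ENNReal.ofReal (exp (-t ^ 2)), fun t ↦ ENNReal.ofReal (exp (-t ^ 2))]
  have hf : ∀ i, Measurable (f i) := fun i ↦ by
    fin_cases i <;>
      simp only [f, Fin.zero_eta, Fin.mk_one, Fin.reduceFinMk, Fin.isValue, Matrix.cons_val_zero,
        Matrix.cons_val_one, Matrix.cons_val] <;>
      fun_prop
  have hsplit : ∀ y : Fin 3 → ℝ,
      ENNReal.ofReal (WithLp.toLp 2 y 0 * exp (-‖WithLp.toLp 2 y‖ ^ 2)) = ∏ i, f i (y i) := by
    intro y
    simp only [f, EuclideanSpace.real_norm_sq_eq, Fin.sum_univ_three, Fin.prod_univ_three,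
      Fin.isValue, Matrix.cons_val_zero, Matrix.cons_val_one, Matrix.cons_val]
    rw [← ENNReal.ofReal_mul' (exp_pos _).le, ← ENNReal.ofReal_mul' (exp_pos _).le, mul_assoc,
      mul_assoc, ← exp_add, ← exp_add]
    ring_nf
  rw [← (PiLp.volume_preserving_toLp (Fin 3)).lintegral_comp_emb
    (MeasurableEquiv.toLp 2 (Fin 3 → ℝ)).measurableEmbedding]
  simp_rw [hsplit]
  rw [volume_pi, lintegral_fin_nat_prod_eq_prod f hf, Fin.prod_univ_three]
  simp only [f, Fin.isValue, Matrix.cons_val_zero, Matrix.cons_val_one, Matrix.cons_val]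
  rw [lintegral_ofReal_mul_exp_neg_sq, lintegral_ofReal_exp_neg_sq,
    ← ENNReal.ofReal_mul (by norm_num), ← ENNReal.ofReal_mul (by positivity), mul_assoc,
    mul_self_sqrt pi_pos.le, one_div_mul_eq_div]

theorem EuclideanSpace.exists_orthonormalBasis_apply_eq {ι : Type*} [Fintype ι] (i₀ : ι)
    {n : EuclideanSpace ℝ ι} (hn : ‖n‖ = 1) :
    ∃ b : OrthonormalBasis ι ℝ (EuclideanSpace ℝ ι), b i₀ = n := by
  have hv : Orthonormal ℝ (({i₀} : Set ι).domRestrict fun _ ↦ n) :=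
    orthonormal_subsingleton_iff.2 fun _ ↦ hn
  obtain ⟨b, hb⟩ := hv.exists_orthonormalBasis_extension_of_card_eq (by simp)
  exact ⟨b, hb i₀ rfl⟩

theorem EuclideanSpace.lintegral_inner_norm_eq_lintegral_apply_norm {ι : Type*} [Fintype ι]
    (i₀ : ι) {n : EuclideanSpace ℝ ι} (hn : ‖n‖ = 1) (F : ℝ → ℝ → ℝ≥0∞) :
    ∫⁻ x : EuclideanSpace ℝ ι, F ⟪x, n⟫ ‖x‖ = ∫⁻ x : EuclideanSpace ℝ ι, F (x i₀) ‖x‖ := by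
  obtain ⟨b, rfl⟩ := exists_orthonormalBasis_apply_eq i₀ hn
  rw [← b.measurePreserving_repr_symm.lintegral_comp_emb
    b.repr.symm.toHomeomorph.measurableEmbedding]
  refine lintegral_congr fun y ↦ ?_
  simp [real_inner_comm, ← b.repr_apply_apply]

theorem lintegral_toSphere_ofReal_inner {n : EuclideanSpace ℝ (Fin 3)} (hn : ‖n‖ = 1) :
    ∫⁻ θ, ENNReal.ofReal ⟪(θ : EuclideanSpace ℝ (Fin 3)), n⟫
      ∂(volume : Measure (EuclideanSpace ℝ (Fin 3))).toSphere = ENNReal.ofReal π := by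
  have hgauss : ∫⁻ x : EuclideanSpace ℝ (Fin 3),
      ENNReal.ofReal (⟪x, n⟫ / ‖x‖) * ENNReal.ofReal (‖x‖ * exp (-‖x‖ ^ 2)) =
        ENNReal.ofReal (π / 2) := by
    rw [← lintegral_ofReal_coord_mul_exp_neg_norm_sq,
      ← EuclideanSpace.lintegral_inner_norm_eq_lintegral_apply_norm 0 hn
        fun a r ↦ ENNReal.ofReal (a * exp (-r ^ 2))]
    refine lintegral_congr fun x ↦ ?_
    rcases eq_or_ne x 0 with rfl | hx
    · simp
    rw [← ENNReal.ofReal_mul' (by positivity), ← mul_assoc,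
      div_mul_cancel₀ _ (norm_ne_zero_iff.2 hx)]
  have hradial : ∫⁻ r in Ioi (0 : ℝ), ENNReal.ofReal (r ^ 2) * ENNReal.ofReal (r * exp (-r ^ 2)) =
      ENNReal.ofReal (1 / 2) := by
    convert lintegral_Ioi_ofReal_pow_mul_exp_neg_sq 1 using 1
    · refine setLIntegral_congr_fun measurableSet_Ioi fun r (hr : 0 < r) ↦ ?_
      rw [← ENNReal.ofReal_mul (by positivity)]
      ring_nf
    · norm_num
  rw [lintegral_ofReal_inner_div_norm_mul volume n (fun r ↦ ENNReal.ofReal (r * exp (-r ^ 2)))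
    (by fun_prop), finrank_euclideanSpace_fin, hradial, ← mul_one_div π,
    ENNReal.ofReal_mul pi_pos.le] at hgauss
  exact (ENNReal.mul_left_inj (by simp) ENNReal.ofReal_ne_top).1 hgauss

theorem lintegral_ofReal_exp_mul_inner_div_norm_pow_three {n : EuclideanSpace ℝ (Fin 3)}
    (hn : ‖n‖ = 1) {β : ℝ} (hβ : 0 < β) :
    ∫⁻ x : EuclideanSpace ℝ (Fin 3), ENNReal.ofReal (exp (-β * ‖x‖) * ⟪x, n⟫ / ‖x‖ ^ 3) =
      ENNReal.ofReal (π / β) := by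
  have hsplit : ∀ x : EuclideanSpace ℝ (Fin 3),
      ENNReal.ofReal (exp (-β * ‖x‖) * ⟪x, n⟫ / ‖x‖ ^ 3) =
        ENNReal.ofReal (⟪x, n⟫ / ‖x‖) * ENNReal.ofReal (exp (-β * ‖x‖) / ‖x‖ ^ 2) := by
    intro x
    rw [← ENNReal.ofReal_mul' (by positivity)]
    ring_nf
  have hradial : ∫⁻ r in Ioi (0 : ℝ),
      ENNReal.ofReal (r ^ 2) * ENNReal.ofReal (exp (-β * r) / r ^ 2) = ENNReal.ofReal (1 / β) :=
    calc ∫⁻ r in Ioi (0 : ℝ), ENNReal.ofReal (r ^ 2) * ENNReal.ofReal (exp (-β * r) / r ^ 2)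
        = ∫⁻ r in Ioi (0 : ℝ), ENNReal.ofReal (exp (-β * r)) :=
          setLIntegral_congr_fun measurableSet_Ioi fun r (hr : 0 < r) ↦ by
            rw [← ENNReal.ofReal_mul (by positivity), mul_div_cancel₀ _ (by positivity)]
      _ = ENNReal.ofReal (1 / β) := by
          rw [← ofReal_integral_eq_lintegral_ofReal (exp_neg_integrableOn_Ioi 0 hβ)
            (.of_forall fun _ ↦ (exp_pos _).le), integral_exp_mul_Ioi (neg_lt_zero.2 hβ),
            mul_zero, exp_zero, neg_div_neg_eq]
  simp_rw [hsplit]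
  rw [lintegral_ofReal_inner_div_norm_mul volume n
    (fun r ↦ ENNReal.ofReal (exp (-β * r) / r ^ 2)) (by fun_prop), finrank_euclideanSpace_fin,
    lintegral_toSphere_ofReal_inner hn, hradial, ← ENNReal.ofReal_mul pi_pos.le, mul_one_div]

theorem stmt_6_general (p n : EuclideanSpace ℝ (Fin 3)) (hn : ‖n‖ = 1) (β : ℝ) (hβ : 0 < β)
    (V : Set (EuclideanSpace ℝ (Fin 3)))
    (hV : V ⊆ {r : EuclideanSpace ℝ (Fin 3) | 0 < ⟪r - p, n⟫}) :
    ∫ r in V, Real.exp (-β * ‖r - p‖) * ⟪r - p, n⟫ / ‖r - p‖ ^ 3 ≤ π / β := by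
  set f := fun r : EuclideanSpace ℝ (Fin 3) ↦ exp (-β * ‖r - p‖) * ⟪r - p, n⟫ / ‖r - p‖ ^ 3
  have hwhole : ∫⁻ r, ENNReal.ofReal (f r) = ENNReal.ofReal (π / β) := by
    rw [← lintegral_add_right_eq_self _ p]
    simpa only [f, add_sub_cancel_right] using
      lintegral_ofReal_exp_mul_inner_div_norm_pow_three hn hβ
  have hf_nonneg : 0 ≤ᵐ[volume.restrict V] f :=
    ae_restrict_of_ae_restrict_of_subset hV <|
      (ae_restrict_mem (measurableSet_lt measurable_const (by fun_prop))).mono fun r hr ↦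
        div_nonneg (mul_nonneg (exp_pos _).le (le_of_lt hr)) (by positivity)
  calc ∫ r in V, f r = (∫⁻ r in V, ENNReal.ofReal (f r)).toReal :=
        integral_eq_lintegral_of_nonneg_ae hf_nonneg (by fun_prop)
    _ ≤ (∫⁻ r, ENNReal.ofReal (f r)).toReal :=
        ENNReal.toReal_mono (hwhole ▸ ENNReal.ofReal_ne_top) (setLIntegral_le_lintegral _ _)
    _ = π / β := by rw [hwhole, ENNReal.toReal_ofReal (by positivity)]

/-- Inequality (10) of the paper's Lemma 2: for a unit vector `n`, `β > 0`, and any measurable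
set `V` contained in the open half-space `{r : (r - p)·n > 0}`, the integral of
`exp(-β‖r - p‖) ((r - p)·n)/‖r - p‖³` over `V` is at most `π/β`. -/
theorem stmt_6 (p n : EuclideanSpace ℝ (Fin 3)) (hn : ‖n‖ = 1) (β : ℝ) (hβ : 0 < β)
    (V : Set (EuclideanSpace ℝ (Fin 3))) (hVmeas : MeasurableSet V)
    (hV : V ⊆ {r : EuclideanSpace ℝ (Fin 3) | 0 < ⟪r - p, n⟫}) :
    ∫ r in V, Real.exp (-β * ‖r - p‖) * ⟪r - p, n⟫ / ‖r - p‖ ^ 3 ≤ π / β :=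
  stmt_6_general p n hn β hβ V hV
end

section
/- Fix p ∈ ℝ³ and n ∈ ℝ³, and define the vector field v : ℝ³ ∖ {p} → ℝ³ by v(r) = (((p − r) · n) / ‖r − p‖⁴) · (r − p). Then v is differentiable on ℝ³ ∖ {p} and its divergence vanishes there: for every r ≠ p, the trace of the Fréchet derivative of v at r is zero. -/
/-!
Write `v s = f s • (s - p)` with `f s = ⟪p - s, n⟫ / ‖s - p‖ ^ 4`. For any scalar field `f`, the
divergence of `f s • (s - p)` is `d · f r + Df(r)(r - p)` in dimension `d`. Here `f` is positively
homogeneous of degree `-3` about `p`, so Euler's identity gives `Df(r)(r - p) = -3 f(r)`, and the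
two terms cancel exactly in dimension `3`.
-/

open scoped RealInnerProductSpace
open Topology

section NormedSpace

variable {E : Type*} [NormedAddCommGroup E] [NormedSpace ℝ E]

theorem trace_fderiv_smul_sub [FiniteDimensional ℝ E] {f : E → ℝ} {r : E}
    (hf : DifferentiableAt ℝ f r) (p : E) :
    LinearMap.trace ℝ E (fderiv ℝ (fun s => f s • (s - p)) r : E →ₗ[ℝ] E)
      = Module.finrank ℝ E * f r + fderiv ℝ f r (r - p) := by
  have hv : HasFDerivAt (fun s => f s • (s - p))
      (f r • ContinuousLinearMap.id ℝ E + (fderiv ℝ f r).smulRight (r - p)) r :=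
    hf.hasFDerivAt.smul ((hasFDerivAt_id r).sub_const p)
  rw [hv.fderiv, ContinuousLinearMap.toLinearMap_add, map_add]
  simp [LinearMap.trace_id, mul_comm]

theorem fderiv_apply_sub_eq_of_homogeneous {f : E → ℝ} {p r : E} {k : ℤ}
    (hf : DifferentiableAt ℝ f r) (hhom : ∀ t : ℝ, 0 < t → f (p + t • (r - p)) = t ^ k * f r) :
    fderiv ℝ f r (r - p) = k * f r := by
  have hline : HasDerivAt (fun t : ℝ => p + t • (r - p)) (r - p) 1 := by
    simpa using ((hasDerivAt_id (1 : ℝ)).smul_const (r - p)).const_add p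
  have hcomp : HasDerivAt (fun t : ℝ => f (p + t • (r - p))) (fderiv ℝ f r (r - p)) 1 := by
    have hf' : HasFDerivAt f (fderiv ℝ f r) (p + (1 : ℝ) • (r - p)) := by
      simpa using hf.hasFDerivAt
    exact hf'.comp_hasDerivAt 1 hline
  have hpow : HasDerivAt (fun t : ℝ => t ^ k * f r) (k * f r) 1 := by
    simpa using (hasDerivAt_zpow k 1 (Or.inl one_ne_zero)).mul_const (f r)
  have heq : (fun t : ℝ => f (p + t • (r - p))) =ᶠ[𝓝 1] fun t => t ^ k * f r :=
    (eventually_gt_nhds one_pos).mono hhom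
  exact hcomp.unique (hpow.congr_of_eventuallyEq heq)

end NormedSpace

section InnerProductSpace

variable {E : Type*} [NormedAddCommGroup E] [InnerProductSpace ℝ E]

theorem differentiableAt_inner_div_norm_pow {p r : E} (n : E) (hr : r ≠ p) (k : ℕ) :
    DifferentiableAt ℝ (fun s => ⟪p - s, n⟫ / ‖s - p‖ ^ k) r := by
  have hrp : r - p ≠ 0 := sub_ne_zero.mpr hr
  have hnum : DifferentiableAt ℝ (fun s => ⟪p - s, n⟫) r :=
    ((differentiableAt_const p).sub differentiableAt_id).inner ℝ (differentiableAt_const n)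
  have hden : DifferentiableAt ℝ (fun s => ‖s - p‖ ^ k) r :=
    ((differentiableAt_id.sub_const p).norm ℝ hrp).pow k
  simp only [div_eq_mul_inv]
  exact hnum.fun_mul (hden.fun_inv (by positivity))

theorem inner_div_norm_pow_homogeneous (p n s : E) (k : ℕ) {t : ℝ} (ht : 0 < t) :
    ⟪p - (p + t • (s - p)), n⟫ / ‖p + t • (s - p) - p‖ ^ k
      = t ^ (1 - k : ℤ) * (⟪p - s, n⟫ / ‖s - p‖ ^ k) := by
  have hnum : p - (p + t • (s - p)) = t • (p - s) := by
    rw [sub_add_cancel_left, ← smul_neg, neg_sub]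
  rw [hnum, add_sub_cancel_left, inner_smul_left, norm_smul, Real.norm_of_nonneg ht.le,
    zpow_sub₀ ht.ne', zpow_one, zpow_natCast, mul_pow]
  simp only [RCLike.conj_to_real]
  field_simp

theorem trace_fderiv_inner_div_norm_pow_smul_sub_eq_zero [FiniteDimensional ℝ E]
    {p r : E} (n : E) (hr : r ≠ p) {k : ℕ} (hk : Module.finrank ℝ E + 1 = k) :
    LinearMap.trace ℝ E
      (fderiv ℝ (fun s => (⟪p - s, n⟫ / ‖s - p‖ ^ k) • (s - p)) r : E →ₗ[ℝ] E) = 0 := by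
  have hf := differentiableAt_inner_div_norm_pow n hr k
  rw [trace_fderiv_smul_sub hf,
    fderiv_apply_sub_eq_of_homogeneous hf fun t ht => inner_div_norm_pow_homogeneous p n r k ht,
    ← hk]
  push_cast
  ring

end InnerProductSpace

/-- Divergence computation from the proof of the paper's Lemma 1: the vector field
`v(r) = (((p - r)·n)/‖r - p‖⁴) (r - p)` is differentiable away from `p` and divergence-free
there (the trace of its Fréchet derivative vanishes). -/
theorem stmt_10 (p n : EuclideanSpace ℝ (Fin 3)) :
    ∀ r : EuclideanSpace ℝ (Fin 3), r ≠ p →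
      DifferentiableAt ℝ
        (fun s : EuclideanSpace ℝ (Fin 3) => (⟪p - s, n⟫ / ‖s - p‖ ^ 4) • (s - p)) r ∧
      LinearMap.trace ℝ (EuclideanSpace ℝ (Fin 3))
        (fderiv ℝ (fun s : EuclideanSpace ℝ (Fin 3) =>
          (⟪p - s, n⟫ / ‖s - p‖ ^ 4) • (s - p)) r : EuclideanSpace ℝ (Fin 3) →ₗ[ℝ]
            EuclideanSpace ℝ (Fin 3)) = 0 := by
  intro r hr
  refine ⟨(differentiableAt_inner_div_norm_pow n hr 4).smul (differentiableAt_id.sub_const p), ?_⟩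
  exact trace_fderiv_inner_div_norm_pow_smul_sub_eq_zero n hr (by simp)
end
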